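/- arXiv:2002.04190 — 5 statements merged into one kernel-verified Lean document; each statement's English description precedes it below -/
import Mathlib

section
/- A sequence of real numbers (x_n) converges statistically to ξ if and only if for every subset A of ℕ with positive upper natural density, there exists an infinite subset A' ⊆ A such that the subsequence (x_n)_{n ∈ A'} converges to ξ in the usual sense. -/
/-!
If `x` converges statistically to `ξ` and `A` has positive upper density, then for each `ε > 0`
the exceptional set `{n | ε ≤ |x n - ξ|}` has density zero, so it cannot contain all but finitely
many elements of `A`. Thus `ξ` is a cluster point of `x` along `A`, and first countability
yields an infinite `A' ⊆ A` along which `x` tends to `ξ`. Conversely, an exceptional set without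
density zero has positive upper density, and `x` cannot tend to `ξ` along any infinite subset of it.
-/

open Filter Topology Set

/-- Upper natural density of a set of naturals. -/
noncomputable def upperDensity (A : Set ℕ) : ℝ :=
  Filter.limsup (fun n => (Nat.card ↥(A ∩ Set.Iio n) : ℝ) / n) Filter.atTop

/-- `A` has natural density `δ`. -/
def HasDensity (A : Set ℕ) (δ : ℝ) : Prop :=
  Filter.Tendsto (fun n => (Nat.card ↥(A ∩ Set.Iio n) : ℝ) / n) Filter.atTop (nhds δ)

/-- Statistical convergence of a real sequence. -/
def StatTendsto (x : ℕ → ℝ) (ξ : ℝ) : Prop :=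
  ∀ ε : ℝ, 0 < ε → HasDensity {n | ε ≤ |x n - ξ|} 0

lemma card_inter_Iio_le (A : Set ℕ) (n : ℕ) : Nat.card ↥(A ∩ Iio n) ≤ n :=
  (Nat.card_mono (finite_Iio n) inter_subset_right).trans_eq (by simp)

lemma card_inter_Iio_mono {A B : Set ℕ} (h : A ⊆ B) (n : ℕ) :
    Nat.card ↥(A ∩ Iio n) ≤ Nat.card ↥(B ∩ Iio n) :=
  Nat.card_mono ((finite_Iio n).inter_of_right B) (inter_subset_inter_left _ h)

lemma card_union_inter_Iio_le (A B : Set ℕ) (n : ℕ) :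
    Nat.card ↥((A ∪ B) ∩ Iio n) ≤ Nat.card ↥(A ∩ Iio n) + Nat.card ↥(B ∩ Iio n) := by
  rw [union_inter_distrib_right]
  exact Set.card_union_le _ _

lemma hasDensity_zero_of_subset {A B : Set ℕ} (h : A ⊆ B) (hB : HasDensity B 0) :
    HasDensity A 0 :=
  squeeze_zero (fun _ => by positivity)
    (fun n => div_le_div_of_nonneg_right (mod_cast card_inter_Iio_mono h n) n.cast_nonneg) hB

lemma HasDensity.union_zero {A B : Set ℕ} (hA : HasDensity A 0) (hB : HasDensity B 0) :
    HasDensity (A ∪ B) 0 := by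
  refine squeeze_zero (fun _ => by positivity) (fun n => ?_) (by simpa using hA.add hB)
  rw [← add_div]
  exact div_le_div_of_nonneg_right (mod_cast card_union_inter_Iio_le A B n) n.cast_nonneg

lemma Set.Finite.hasDensity_zero {F : Set ℕ} (hF : F.Finite) : HasDensity F 0 :=
  squeeze_zero (fun _ => by positivity)
    (fun n => div_le_div_of_nonneg_right
      (Nat.cast_le.2 (Nat.card_mono hF inter_subset_left)) n.cast_nonneg)
    (tendsto_const_div_atTop_nhds_zero_nat _)

lemma HasDensity.upperDensity_eq {A : Set ℕ} {δ : ℝ} (h : HasDensity A δ) :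
    upperDensity A = δ :=
  Tendsto.limsup_eq h

lemma hasDensity_zero_of_upperDensity_nonpos {A : Set ℕ} (h : upperDensity A ≤ 0) :
    HasDensity A 0 := by
  have hbdd : IsBoundedUnder (· ≤ ·) atTop fun n : ℕ => (Nat.card ↥(A ∩ Iio n) : ℝ) / n :=
    isBoundedUnder_of ⟨1, fun n =>
      div_le_one_of_le₀ (mod_cast card_inter_Iio_le A n) n.cast_nonneg⟩
  have hbdd' : IsBoundedUnder (· ≥ ·) atTop fun n : ℕ => (Nat.card ↥(A ∩ Iio n) : ℝ) / n :=
    isBoundedUnder_of ⟨0, fun _ => by positivity⟩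
  exact tendsto_of_le_liminf_of_limsup_le
    (le_liminf_of_le hbdd.isCoboundedUnder_ge (.of_forall fun _ => by positivity)) h hbdd hbdd'

lemma infinite_diff_of_upperDensity_pos {A B : Set ℕ} (hA : 0 < upperDensity A)
    (hB : HasDensity B 0) : (A \ B).Infinite := by
  intro hfin
  have hA0 : HasDensity A 0 :=
    hasDensity_zero_of_subset (subset_sdiff_union A B) (hfin.hasDensity_zero.union_zero hB)
  exact hA.ne' hA0.upperDensity_eq

lemma StrictMono.map_atTop_eq {f : ℕ → ℕ} (hf : StrictMono f) :
    map f atTop = atTop ⊓ 𝓟 (range f) := by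
  rw [← map_comap, comap_embedding_atTop (fun _ _ => hf.le_iff_le) fun c => ⟨c, hf.id_le c⟩]

lemma Nat.atTop_inf_principal_neBot_iff {A : Set ℕ} : (atTop ⊓ 𝓟 A).NeBot ↔ A.Infinite := by
  rw [← Nat.cofinite_eq_atTop, cofinite_inf_principal_neBot_iff]

lemma MapClusterPt.exists_infinite_subset_tendsto {X : Type*} [TopologicalSpace X]
    [FirstCountableTopology X] {x : ℕ → X} {ξ : X} {A : Set ℕ}
    (h : MapClusterPt ξ (atTop ⊓ 𝓟 A) x) :
    ∃ A' ⊆ A, A'.Infinite ∧ Tendsto x (atTop ⊓ 𝓟 A') (𝓝 ξ) := by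
  have hA : A.Infinite := by
    have := h.neBot.mono inf_le_right
    exact Nat.atTop_inf_principal_neBot_iff.1 (map_neBot_iff _ |>.1 this)
  obtain ⟨e, he, rfl⟩ : ∃ e : ℕ → ℕ, StrictMono e ∧ range e = A :=
    ⟨_, Nat.nth_strictMono hA, Nat.range_nth_of_infinite hA⟩
  rw [← he.map_atTop_eq, ← mapClusterPt_comp] at h
  obtain ⟨ψ, hψ, hlim⟩ := h.tendsto_subseq
  refine ⟨range (e ∘ ψ), range_comp_subset_range _ _,
    infinite_range_of_injective (he.comp hψ).injective, ?_⟩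
  rwa [← (he.comp hψ).map_atTop_eq, tendsto_map'_iff]

/-- A real sequence converges statistically to `ξ` iff every set of positive upper
density contains an infinite subset along which the sequence converges to `ξ`. -/
theorem statTendsto_iff_subseq_of_posUpperDensity (x : ℕ → ℝ) (ξ : ℝ) :
    StatTendsto x ξ ↔
      ∀ A : Set ℕ, 0 < upperDensity A →
        ∃ A' ⊆ A, A'.Infinite ∧
          Filter.Tendsto x (Filter.atTop ⊓ Filter.principal A') (nhds ξ) := by
  constructor
  · intro hx A hA
    refine MapClusterPt.exists_infinite_subset_tendsto ?_
    rw [Metric.nhds_basis_ball.mapClusterPt_iff_frequently]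
    intro ε hε
    rw [frequently_inf_principal, Nat.frequently_atTop_iff_infinite]
    convert infinite_diff_of_upperDensity_pos hA (hx ε hε) using 1
    ext n
    simp [Real.dist_eq]
  · intro h ε hε
    by_contra hB
    obtain ⟨A', hA'B, hA', hlim⟩ :=
      h _ (lt_of_not_ge (mt hasDensity_zero_of_upperDensity_nonpos hB))
    have := Nat.atTop_inf_principal_neBot_iff.2 hA'
    obtain ⟨n, hnε, hnA'⟩ := ((hlim.eventually (Metric.ball_mem_nhds ξ hε)).and
      (mem_inf_of_right (mem_principal_self A'))).exists
    rw [Real.dist_eq] at hnε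
    exact (hA'B hnA').not_gt hnε
end

section
/- A sequence of real numbers (x_n) converges statistically to x₀ if and only if there exists a subset A of ℕ of natural density 1 such that the subsequence (x_n)_{n ∈ A} converges to x₀ in the usual sense. -/
open Filter Topology Set

/-! Forward direction: the sets `{n | 1/(k+1) ≤ |x n - x₀|}` increase with `k` and have density
zero. Choosing thresholds `φ k` beyond which the `k`-th of them has relative count `< 1/(k+1)`,
the set `B` that agrees with the `k`-th one on the block `[φ k, φ (k+1))` still has density zero,
while beyond `φ k` it contains the `k`-th one; so `x → x₀` off `B`. Backward direction: if
`x → x₀` along `A`, then `{n | ε ≤ |x n - x₀|}` lies in `Aᶜ` up to finitely many elements. -/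

lemma natCard_inter_Iio_div_mono {A B : Set ℕ} {n : ℕ} (h : A ∩ Iio n ⊆ B) :
    (Nat.card ↥(A ∩ Iio n) : ℝ) / n ≤ Nat.card ↥(B ∩ Iio n) / n := by
  gcongr
  exact Nat.card_mono ((finite_Iio n).inter_of_right B) (subset_inter h inter_subset_right)

lemma natCard_inter_Iio_add_natCard_compl_inter_Iio (A : Set ℕ) (n : ℕ) :
    Nat.card ↥(A ∩ Iio n) + Nat.card ↥(Aᶜ ∩ Iio n) = n := by
  simpa [Nat.card_coe_set_eq, inter_comm, sdiff_eq_compl_inter] using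
    ncard_inter_add_ncard_sdiff_eq_ncard (Iio n) A (finite_Iio n)

namespace HasDensity

lemma compl {A : Set ℕ} {δ : ℝ} (h : HasDensity A δ) : HasDensity Aᶜ (1 - δ) := by
  refine (tendsto_const_nhds.sub h).congr' ?_
  filter_upwards [eventually_ne_atTop 0] with n hn
  have hcount : (Nat.card ↥(Aᶜ ∩ Iio n) : ℝ) = n - Nat.card ↥(A ∩ Iio n) := by
    rw [eq_sub_iff_add_eq', ← Nat.cast_add, natCard_inter_Iio_add_natCard_compl_inter_Iio]
  rw [hcount, sub_div, div_self (Nat.cast_ne_zero.2 hn)]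

lemma zero_of_eventually_mem {E F : Set ℕ} (hF : HasDensity F 0)
    (hEF : ∀ᶠ n in atTop, n ∈ E → n ∈ F) : HasDensity E 0 := by
  obtain ⟨M, hM⟩ := eventually_atTop.1 hEF
  have hcount (n : ℕ) : Nat.card ↥(E ∩ Iio n) ≤ Nat.card ↥(F ∩ Iio n) + M := by
    have hsub : E ∩ Iio n ⊆ (F ∩ Iio n) ∪ Iio M := fun m ⟨hmE, hmn⟩ =>
      (lt_or_ge m M).elim Or.inr fun hm => Or.inl ⟨hM m hm hmE, hmn⟩
    simp only [Nat.card_coe_set_eq]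
    calc (E ∩ Iio n).ncard ≤ ((F ∩ Iio n) ∪ Iio M).ncard :=
          ncard_le_ncard hsub (((finite_Iio n).inter_of_right F).union (finite_Iio M))
      _ ≤ (F ∩ Iio n).ncard + (Iio M).ncard := ncard_union_le _ _
      _ = (F ∩ Iio n).ncard + M := by rw [ncard_Iio_nat]
  have hbound : Tendsto (fun n : ℕ => (Nat.card ↥(F ∩ Iio n) : ℝ) / n + M / n) atTop (𝓝 0) := by
    simpa using hF.add (tendsto_const_nhds.div_atTop tendsto_natCast_atTop_atTop)
  refine squeeze_zero (fun n => by positivity) (fun n => ?_) hbound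
  rw [← add_div]
  gcongr
  exact_mod_cast hcount n

end HasDensity

lemma StrictMono.exists_mem_Ico_of_le {φ : ℕ → ℕ} (hφ : StrictMono φ) {k n : ℕ} (hn : φ k ≤ n) :
    ∃ K, k ≤ K ∧ n ∈ Ico (φ K) (φ (K + 1)) := by
  have hex : ∃ j, n < φ j := ⟨n + 1, (Nat.lt_succ_self n).trans_le hφ.le_apply⟩
  have hk : k < Nat.find hex := by
    by_contra! h
    exact (hn.trans_lt (Nat.find_spec hex)).not_ge (hφ.monotone h)
  refine ⟨Nat.find hex - 1, by omega, not_lt.1 (Nat.find_min hex (by omega)), ?_⟩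
  rw [Nat.sub_add_cancel (by omega)]
  exact Nat.find_spec hex

def blockUnion (E : ℕ → Set ℕ) (φ : ℕ → ℕ) : Set ℕ :=
  ⋃ k, E k ∩ Ico (φ k) (φ (k + 1))

section blockUnion

variable {E : ℕ → Set ℕ} {φ : ℕ → ℕ}

lemma blockUnion_inter_Iio_subset (hE : Monotone E) (hφ : StrictMono φ) {K n : ℕ}
    (hn : n ≤ φ (K + 1)) : blockUnion E φ ∩ Iio n ⊆ E K := by
  rintro m ⟨hm, hmn⟩
  obtain ⟨j, hmE, hjm, -⟩ := mem_iUnion.1 hm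
  have hjK : j ≤ K := Nat.lt_succ_iff.1 (hφ.lt_iff_lt.1 (hjm.trans_lt (hmn.trans_le hn)))
  exact hE hjK hmE

lemma mem_blockUnion (hE : Monotone E) (hφ : StrictMono φ) {k n : ℕ} (hkn : φ k ≤ n)
    (hn : n ∈ E k) : n ∈ blockUnion E φ := by
  obtain ⟨K, hkK, hnK⟩ := hφ.exists_mem_Ico_of_le hkn
  exact mem_iUnion.2 ⟨K, hE hkK hn, hnK⟩

lemma hasDensity_blockUnion (hE : Monotone E) (hφ : StrictMono φ)
    (hsmall : ∀ k, ∀ n ≥ φ k, (Nat.card ↥(E k ∩ Iio n) : ℝ) / n < 1 / (k + 1)) :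
    HasDensity (blockUnion E φ) 0 := by
  refine tendsto_order.2
    ⟨fun a ha => Eventually.of_forall fun n => ha.trans_le (by positivity), fun ε hε => ?_⟩
  obtain ⟨k, hk⟩ := exists_nat_one_div_lt hε
  filter_upwards [eventually_ge_atTop (φ k)] with n hn
  obtain ⟨K, hkK, hKn, hnK⟩ := hφ.exists_mem_Ico_of_le hn
  calc _ ≤ (Nat.card ↥(E K ∩ Iio n) : ℝ) / n :=
        natCard_inter_Iio_div_mono (blockUnion_inter_Iio_subset hE hφ hnK.le)
    _ < 1 / (K + 1) := hsmall K n hKn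
    _ ≤ 1 / (k + 1) := Nat.one_div_le_one_div hkK
    _ < ε := hk

end blockUnion

theorem exists_hasDensity_zero_eventually_mem {E : ℕ → Set ℕ} (hE : Monotone E)
    (hzero : ∀ k, HasDensity (E k) 0) :
    ∃ B, HasDensity B 0 ∧ ∀ k, ∀ᶠ n in atTop, n ∈ E k → n ∈ B := by
  obtain ⟨φ, hφ, hsmall⟩ := extraction_forall_of_eventually fun k =>
    eventually_forall_ge_atTop.2 <| (hzero k).eventually_lt_const Nat.one_div_pos_of_nat
  exact ⟨blockUnion E φ, hasDensity_blockUnion hE hφ hsmall, fun k =>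
    (eventually_ge_atTop (φ k)).mono fun n hn => mem_blockUnion hE hφ hn⟩

/-- A real sequence converges statistically to `x₀` iff it converges to `x₀`
along a set of natural density 1. -/
theorem statTendsto_iff_tendsto_on_density_one (x : ℕ → ℝ) (x₀ : ℝ) :
    StatTendsto x x₀ ↔
      ∃ A : Set ℕ, HasDensity A 1 ∧
        Filter.Tendsto x (Filter.atTop ⊓ Filter.principal A) (nhds x₀) := by
  simp_rw [Metric.tendsto_nhds, eventually_inf_principal, Real.dist_eq]
  constructor
  · intro hx
    have hmono : Monotone fun k : ℕ => {n | 1 / ((k : ℝ) + 1) ≤ |x n - x₀|} :=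
      fun _ _ hjk _ => (Nat.one_div_le_one_div (α := ℝ) hjk).trans
    obtain ⟨B, hB, hEB⟩ :=
      exists_hasDensity_zero_eventually_mem hmono fun k => hx _ Nat.one_div_pos_of_nat
    refine ⟨Bᶜ, by simpa using hB.compl, fun ε hε => ?_⟩
    obtain ⟨k, hk⟩ := exists_nat_one_div_lt hε
    filter_upwards [hEB k] with n hn hnB
    by_contra! h
    exact hnB (hn (hk.le.trans h))
  · rintro ⟨A, hA, hxA⟩ ε hε
    refine (by simpa using hA.compl : HasDensity Aᶜ 0).zero_of_eventually_mem ?_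
    filter_upwards [hxA ε hε] with n hn hnε hnA
    exact (hn hnA).not_ge hnε
end

section
/- Let (a_n) be an arithmetic sequence, x ∈ 𝕋 with canonical representation x = Σ c_n/a_n, and B ⊆ ℕ with positive upper natural density such that lim_{n ∈ B} a_{n-1}x = 0 in 𝕋. If d(B ∩ supp(x)) = 0, then there exists B' ⊆ B with d(B \ B') = 0 such that lim_{n ∈ B'} {a_{n-1}x} = 0 in ℝ (i.e., the fractional parts converge to 0 as real numbers, not merely modulo 1). -/
open Filter Topology Set

/-- An arithmetic sequence: `a 0 = 1 < a 1 < a 2 < ⋯` and `a n ∣ a (n+1)`. -/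
def IsArithmeticSeq (a : ℕ → ℕ) : Prop :=
  a 0 = 1 ∧ StrictMono a ∧ ∀ n, a n ∣ a (n + 1)

/-- The ratio `q n = a n / a (n-1)` as a real number. -/
noncomputable def qr (a : ℕ → ℕ) (n : ℕ) : ℝ := (a n : ℝ) / (a (n - 1) : ℝ)

/-- `(c n)` is a canonical representation sequence w.r.t. `(a n)`:
`0 ≤ c n < q n` and `c n < q n - 1` for infinitely many `n`. -/
def IsCanonicalRep (a : ℕ → ℕ) (c : ℕ → ℕ) : Prop :=
  c 0 = 0 ∧ (∀ n, 1 ≤ n → c n < a n / a (n - 1)) ∧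
    (∀ N, ∃ n, N ≤ n ∧ 1 ≤ n ∧ c n + 1 < a n / a (n - 1))

/-- Support of (the canonical representation of) `x`. -/
def suppRep (c : ℕ → ℕ) : Set ℕ := {n | 1 ≤ n ∧ c n ≠ 0}

/-- `supp_q(x) = {n : c n = q n - 1}`. -/
def suppqRep (a c : ℕ → ℕ) : Set ℕ := {n | 1 ≤ n ∧ c n + 1 = a n / a (n - 1)}

/-- A set `S ⊆ ℕ` is `q`-bounded if `(q n)` is bounded on `S`. -/
def QBounded (a : ℕ → ℕ) (S : Set ℕ) : Prop := ∃ M, ∀ n ∈ S, a n / a (n - 1) ≤ M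

/-- A set `S ⊆ ℕ` is `q`-divergent if `q n → ∞` along `n ∈ S`. -/
def QDivergent (a : ℕ → ℕ) (S : Set ℕ) : Prop :=
  Filter.Tendsto (fun n => a n / a (n - 1)) (Filter.atTop ⊓ Filter.principal S) Filter.atTop

/-- Statistical convergence in a topological space, via neighborhoods. -/
def StatNhdTendsto {α : Type*} [TopologicalSpace α] (y : ℕ → α) (ℓ : α) : Prop :=
  ∀ U ∈ nhds ℓ, HasDensity {n | y n ∉ U} 0

/-!
If `n ∉ supp(x)`, then `a_{n-1} x = K + a_{n-1} ∑_{i > n} c_i / a_i` with `K ∈ ℕ`, and the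
digit bound `c_i ≤ q_i - 1` telescopes to `∑_{i > n} c_i / a_i ≤ 1 / a_n ≤ 1 / (2 a_{n-1})`.
So the fractional part of `a_{n-1} x` lies in `[0, 1/2]`, where it coincides with the distance
`‖a_{n-1} x‖` of `a_{n-1} x` to `0` in `𝕋`. Removing `B ∩ supp(x)`, a set of density zero,
from `B` therefore turns convergence in `𝕋` into convergence in `ℝ`.
-/

namespace IsArithmeticSeq

variable {a : ℕ → ℕ}

lemma pos (ha : IsArithmeticSeq a) (n : ℕ) : 0 < a n :=
  (show 0 < a 0 by rw [ha.1]; exact one_pos).trans_le (ha.2.1.monotone n.zero_le)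

lemma dvd_of_le (ha : IsArithmeticSeq a) {m n : ℕ} (h : m ≤ n) : a m ∣ a n := by
  induction n, h using Nat.le_induction with
  | base => exact dvd_rfl
  | succ k _ ih => exact ih.trans (ha.2.2 k)

lemma two_mul_le_succ (ha : IsArithmeticSeq a) (n : ℕ) : 2 * a n ≤ a (n + 1) := by
  obtain ⟨k, hk⟩ := ha.2.2 n
  have hlt : a n < a n * k := hk ▸ ha.2.1 (Nat.lt_succ_self n)
  have hk2 : 2 ≤ k := by
    by_contra! h
    interval_cases k <;> simp at hlt
  calc 2 * a n ≤ a n * k := by rw [mul_comm]; exact Nat.mul_le_mul_left _ hk2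
    _ = a (n + 1) := hk.symm

end IsArithmeticSeq

lemma AddCircle.norm_coe_eq_self {p u : ℝ} (hp : 0 < p) (hu0 : 0 ≤ u) (hu : u ≤ p / 2) :
    ‖(u : AddCircle p)‖ = u := by
  rw [(AddCircle.norm_coe_eq_abs_iff p hp.ne').mpr, abs_of_nonneg hu0]
  rwa [abs_of_nonneg hu0, abs_of_pos hp]

section Digits

variable {a c : ℕ → ℕ}

lemma digit_div_le_sub (ha : IsArithmeticSeq a) {n : ℕ} (hcn : c (n + 1) < a (n + 1) / a n) :
    (c (n + 1) : ℝ) / a (n + 1) ≤ 1 / a n - 1 / a (n + 1) := by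
  have hp : (0 : ℝ) < a n := by exact_mod_cast ha.pos n
  have hq : (0 : ℝ) < a (n + 1) := by exact_mod_cast ha.pos (n + 1)
  have hdigit : ((c (n + 1) : ℝ) + 1) * a n ≤ a (n + 1) := by
    exact_mod_cast (Nat.le_div_iff_mul_le (ha.pos n)).mp hcn
  rw [div_sub_div _ _ hp.ne' hq.ne', div_le_div_iff₀ hq (by positivity)]
  nlinarith

lemma sum_range_digit_tail_le (ha : IsArithmeticSeq a)
    (hc : ∀ n, 1 ≤ n → c n < a n / a (n - 1)) (m N : ℕ) :
    ∑ i ∈ Finset.range N, (c (i + (m + 1)) : ℝ) / a (i + (m + 1)) ≤ 1 / a m := by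
  have hterm (i : ℕ) :
      (c (i + (m + 1)) : ℝ) / a (i + (m + 1)) ≤ 1 / a (m + i) - 1 / a (m + i + 1) := by
    rw [show i + (m + 1) = m + i + 1 by omega]
    exact digit_div_le_sub ha (hc (m + i + 1) (by omega))
  calc ∑ i ∈ Finset.range N, (c (i + (m + 1)) : ℝ) / a (i + (m + 1))
      ≤ ∑ i ∈ Finset.range N, ((1 : ℝ) / a (m + i) - 1 / a (m + i + 1)) :=
        Finset.sum_le_sum fun i _ => hterm i
    _ = 1 / a m - 1 / a (m + N) := Finset.sum_range_sub' (fun i => (1 : ℝ) / a (m + i)) N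
    _ ≤ 1 / a m := sub_le_self _ (by positivity)

lemma summable_digits (ha : IsArithmeticSeq a) (hc : ∀ n, 1 ≤ n → c n < a n / a (n - 1)) :
    Summable fun n => (c n : ℝ) / a n :=
  (summable_nat_add_iff 1).mp <|
    summable_of_sum_range_le (fun _ => by positivity) (sum_range_digit_tail_le ha hc 0)

lemma tsum_digit_tail_le (ha : IsArithmeticSeq a) (hc : ∀ n, 1 ≤ n → c n < a n / a (n - 1))
    (m : ℕ) : ∑' i, (c (i + (m + 1)) : ℝ) / a (i + (m + 1)) ≤ 1 / a m :=
  Real.tsum_le_of_sum_range_le (fun _ => by positivity) (sum_range_digit_tail_le ha hc m)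

lemma exists_nat_mul_tsum_eq (ha : IsArithmeticSeq a)
    (hc : ∀ n, 1 ≤ n → c n < a n / a (n - 1)) (m : ℕ) :
    ∃ K : ℕ, (a m : ℝ) * ∑' i, (c i : ℝ) / a i =
      K + a m * ∑' i, (c (i + (m + 1)) : ℝ) / a (i + (m + 1)) := by
  refine ⟨∑ i ∈ Finset.range (m + 1), c i * (a m / a i), ?_⟩
  rw [← (summable_digits ha hc).sum_add_tsum_nat_add (m + 1), mul_add, Finset.mul_sum]
  push_cast
  congr 1
  refine Finset.sum_congr rfl fun i hi => ?_
  have hdvd : a i ∣ a m := ha.dvd_of_le (Nat.lt_succ_iff.mp (Finset.mem_range.mp hi))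
  have hai : (a i : ℝ) ≠ 0 := by exact_mod_cast (ha.pos i).ne'
  rw [Nat.cast_div hdvd hai]
  field_simp

lemma mul_tsum_digit_tail_le_half (ha : IsArithmeticSeq a)
    (hc : ∀ n, 1 ≤ n → c n < a n / a (n - 1)) {m : ℕ} (hcm : c (m + 1) = 0) :
    (a m : ℝ) * ∑' i, (c (i + (m + 1)) : ℝ) / a (i + (m + 1)) ≤ 1 / 2 := by
  have hshift : ∑' i, (c (i + (m + 1)) : ℝ) / a (i + (m + 1)) =
      ∑' i, (c (i + (m + 1 + 1)) : ℝ) / a (i + (m + 1 + 1)) := by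
    rw [((summable_nat_add_iff (m + 1)).mpr (summable_digits ha hc)).tsum_eq_zero_add]
    simp only [zero_add, hcm, Nat.cast_zero, zero_div]
    exact tsum_congr fun i => by rw [show i + 1 + (m + 1) = i + (m + 1 + 1) by omega]
  have htail := tsum_digit_tail_le ha hc (m + 1)
  have h2 : 2 * (a m : ℝ) ≤ a (m + 1) := by exact_mod_cast ha.two_mul_le_succ m
  have hp : (0 : ℝ) < a m := by exact_mod_cast ha.pos m
  have hT0 : 0 ≤ ∑' i, (c (i + (m + 1 + 1)) : ℝ) / a (i + (m + 1 + 1)) := by positivity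
  rw [le_div_iff₀ (by linarith)] at htail
  rw [hshift]
  nlinarith

lemma fract_mul_tsum_eq_norm_of_digit_eq_zero (ha : IsArithmeticSeq a)
    (hc : ∀ n, 1 ≤ n → c n < a n / a (n - 1)) {m : ℕ} (hcm : c (m + 1) = 0) :
    Int.fract ((a m : ℝ) * ∑' i, (c i : ℝ) / a i) =
      ‖a m • (((∑' i, (c i : ℝ) / a i : ℝ)) : AddCircle (1 : ℝ))‖ := by
  obtain ⟨K, hK⟩ := exists_nat_mul_tsum_eq ha hc m
  set u : ℝ := a m * ∑' i, (c (i + (m + 1)) : ℝ) / a (i + (m + 1))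
  have hu0 : 0 ≤ u := by positivity
  have hu_half : u ≤ 1 / 2 := mul_tsum_digit_tail_le_half ha hc hcm
  have hfract : Int.fract ((a m : ℝ) * ∑' i, (c i : ℝ) / a i) = u := by
    rw [hK, ← Int.cast_natCast K, Int.fract_intCast_add, Int.fract_eq_self]
    exact ⟨hu0, by linarith⟩
  have hcoe : a m • (((∑' i, (c i : ℝ) / a i : ℝ)) : AddCircle (1 : ℝ)) = u := by
    rw [← AddCircle.coe_nsmul, nsmul_eq_mul, hK, AddCircle.coe_add,
      (AddCircle.coe_eq_zero_iff 1).mpr ⟨K, by simp⟩, zero_add]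
  rw [hfract, hcoe, AddCircle.norm_coe_eq_self one_pos hu0 hu_half]

end Digits

theorem lemma_nec_ii_general (a c : ℕ → ℕ) (ha : IsArithmeticSeq a) (hc : IsCanonicalRep a c)
    (x : AddCircle (1 : ℝ))
    (hx : x = ((∑' n, (c n : ℝ) / (a n : ℝ) : ℝ) : AddCircle (1 : ℝ)))
    (B : Set ℕ)
    (hlim : Filter.Tendsto (fun n => a (n - 1) • x)
      (Filter.atTop ⊓ Filter.principal B) (nhds 0))
    (hd : HasDensity (B ∩ suppRep c) 0) :
    ∃ B' ⊆ B, HasDensity (B \ B') 0 ∧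
      Filter.Tendsto
        (fun n => Int.fract ((a (n - 1) : ℝ) * ∑' i, (c i : ℝ) / (a i : ℝ)))
        (Filter.atTop ⊓ Filter.principal B') (nhds 0) := by
  refine ⟨B \ suppRep c, sdiff_subset, by rwa [Set.sdiff_sdiff_right_self], ?_⟩
  have hnorm : Tendsto (fun n => ‖a (n - 1) • x‖) (atTop ⊓ 𝓟 (B \ suppRep c)) (𝓝 0) :=
    tendsto_zero_iff_norm_tendsto_zero.mp <|
      hlim.mono_left (inf_le_inf_left _ (principal_mono.mpr sdiff_subset))
  refine hnorm.congr' ?_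
  filter_upwards [inf_le_left (a := atTop) (eventually_ge_atTop 1),
    inf_le_right (b := 𝓟 (B \ suppRep c)) (mem_principal_self _)] with n hn hnB
  obtain ⟨m, rfl⟩ : ∃ m, n = m + 1 := ⟨n - 1, by omega⟩
  have hcm : c (m + 1) = 0 := by simpa [suppRep] using hnB.2
  rw [hx, Nat.add_sub_cancel, fract_mul_tsum_eq_norm_of_digit_eq_zero ha hc.2.1 hcm]

/-- Lemma 1.8 (ii): if `B` has positive upper density, `a_{n-1} x → 0` along `B`,
and `d(B ∩ supp(x)) = 0`, then the fractional parts `{a_{n-1} x}` converge to `0`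
in `ℝ` along some `B' ⊆ B` with `d(B \ B') = 0`. -/
theorem lemma_nec_ii (a c : ℕ → ℕ) (ha : IsArithmeticSeq a) (hc : IsCanonicalRep a c)
    (x : AddCircle (1 : ℝ))
    (hx : x = ((∑' n, (c n : ℝ) / (a n : ℝ) : ℝ) : AddCircle (1 : ℝ)))
    (B : Set ℕ) (hB : 0 < upperDensity B)
    (hlim : Filter.Tendsto (fun n => a (n - 1) • x)
      (Filter.atTop ⊓ Filter.principal B) (nhds 0))
    (hd : HasDensity (B ∩ suppRep c) 0) :
    ∃ B' ⊆ B, HasDensity (B \ B') 0 ∧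
      Filter.Tendsto
        (fun n => Int.fract ((a (n - 1) : ℝ) * ∑' i, (c i : ℝ) / (a i : ℝ)))
        (Filter.atTop ⊓ Filter.principal B') (nhds 0) :=
  lemma_nec_ii_general a c ha hc x hx B hlim hd
end

section
/- Let A_i = {n ∈ ℕ : n = k² + (i−1) for some k ∈ ℕ} \ (A_1 ∪ ⋯ ∪ A_{i−1}) (so A_1 = perfect squares, etc.), which partitions ℕ, and define q_n = i for n ∈ A_i. Then (q_n) has the d-splitting property but not the splitting property. -/
open Filter Topology Set

/-- The `d`-splitting property of a sequence `(q n)` of naturals. -/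
def HasDSplitting (q : ℕ → ℕ) : Prop :=
  ∃ B D : Set ℕ, B ∪ D = Set.univ ∧ Disjoint B D ∧
    (B = ∅ ∨ 0 < upperDensity B) ∧ (D = ∅ ∨ 0 < upperDensity D) ∧
    (0 < upperDensity B →
      ∃ B' : Set ℕ, HasDensity (symmDiff B B') 0 ∧ ∃ M, ∀ n ∈ B', q n ≤ M) ∧
    (0 < upperDensity D →
      ∃ D' : Set ℕ, HasDensity (symmDiff D D') 0 ∧
        Filter.Tendsto q (Filter.atTop ⊓ Filter.principal D') Filter.atTop)

/-- The splitting property of a sequence `(q n)` of naturals. -/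
def HasSplitting (q : ℕ → ℕ) : Prop :=
  ∃ B I : Set ℕ, B ∪ I = Set.univ ∧ Disjoint B I ∧
    (B = ∅ ∨ B.Infinite) ∧ (I = ∅ ∨ I.Infinite) ∧
    (B.Infinite → ∃ M, ∀ n ∈ B, q n ≤ M) ∧
    (I.Infinite → Filter.Tendsto q (Filter.atTop ⊓ Filter.principal I) Filter.atTop)

/-!
An integer `n ≥ 1` lies in `A i` exactly when `n - ⌊√n⌋² = i - 1`, so `q n = n - ⌊√n⌋² + 1`.
Every value `j + 1` is therefore taken at `k² + j` for all large `k`; a value above the bound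
of the bounded part must then lie infinitely often in the part along which `q → ∞`, which is
impossible. On the other hand at most `(⌊√N⌋ + 1) s` integers `n < N` have `q n ≤ s`, so
`q n ≤ ⌊n^{1/4}⌋` only on a set of density zero, and off that set `q → ∞`.
-/

lemma upperDensity_empty : upperDensity ∅ = 0 := by
  simp [upperDensity]

lemma upperDensity_univ : upperDensity univ = 1 := by
  have h : (fun N : ℕ => (Nat.card ↥(univ ∩ Iio N) : ℝ) / N) =ᶠ[atTop] fun _ => 1 := by
    filter_upwards [eventually_ge_atTop 1] with N hN
    rw [univ_inter, Nat.card_coe_set_eq, ncard_Iio_nat, div_self (by positivity)]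
  rw [upperDensity, limsup_congr h, limsup_const]

lemma hasDSplitting_of_tendsto_inf_compl {q : ℕ → ℕ} {E : Set ℕ} (hE : HasDensity E 0)
    (hq : Tendsto q (atTop ⊓ 𝓟 Eᶜ) atTop) : HasDSplitting q := by
  refine ⟨∅, univ, empty_union _, empty_disjoint _, Or.inl rfl,
    Or.inr (by rw [upperDensity_univ]; exact one_pos), fun h => ?_, fun _ => ⟨Eᶜ, ?_, hq⟩⟩
  · exact (lt_irrefl 0 (upperDensity_empty ▸ h)).elim
  · rwa [show symmDiff univ Eᶜ = E by ext; simp [symmDiff_def]]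

lemma not_hasSplitting_of_frequently_eq {q : ℕ → ℕ}
    (h : ∀ M, ∃ v, M < v ∧ ∃ᶠ n in atTop, q n = v) : ¬ HasSplitting q := by
  rintro ⟨B, I, hcover, -, hB, hI, hB_bdd, hI_tendsto⟩
  obtain ⟨M, hM⟩ : ∃ M, ∀ n ∈ B, q n ≤ M := hB.elim (fun hB => ⟨0, by simp [hB]⟩) hB_bdd
  obtain ⟨v, hMv, hfreq⟩ := h M
  have mem_I : ∀ n, q n = v → n ∈ I := fun n hn =>
    ((hcover ▸ mem_univ n : n ∈ B ∪ I)).resolve_left fun hnB => (hM n hnB).not_gt (hn ▸ hMv)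
  rcases hI with rfl | hI_inf
  · obtain ⟨n, -, hn⟩ := frequently_atTop.1 hfreq 0
    exact mem_I n hn
  · have hlarge := (hI_tendsto hI_inf).eventually_gt_atTop v
    rw [eventually_inf_principal] at hlarge
    obtain ⟨n, hn, hn_large⟩ := (hfreq.and_eventually hlarge).exists
    exact (hn_large (mem_I n hn)).ne' hn

lemma tendsto_nat_sqrt_atTop : Tendsto Nat.sqrt atTop atTop :=
  tendsto_atTop_atTop.2 fun b => ⟨b ^ 2, fun _ hn => Nat.le_sqrt'.2 hn⟩

lemma sub_sqrt_sq_of_le_two_mul {k j : ℕ} (h : j ≤ 2 * k) :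
    k ^ 2 + j - Nat.sqrt (k ^ 2 + j) ^ 2 = j := by
  rw [Nat.sqrt_add_eq' k (by omega)]
  omega

lemma frequently_sub_sqrt_sq_eq (j : ℕ) : ∃ᶠ n in atTop, n - Nat.sqrt n ^ 2 = j :=
  frequently_atTop.2 fun a => ⟨(a + j) ^ 2 + j, by nlinarith, sub_sqrt_sq_of_le_two_mul (by omega)⟩

lemma card_sub_sqrt_sq_lt_le (s N : ℕ) :
    Nat.card ↥({n | n - Nat.sqrt n ^ 2 < s} ∩ Iio N) ≤ (Nat.sqrt N + 1) * s := by
  classical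
  have hsub : {n | n - Nat.sqrt n ^ 2 < s} ∩ Iio N ⊆
      ↑(((Finset.range (Nat.sqrt N + 1)) ×ˢ Finset.range s).image fun p => p.1 ^ 2 + p.2) := by
    rintro n ⟨hns, hnN⟩
    refine Finset.mem_image.2 ⟨(Nat.sqrt n, n - Nat.sqrt n ^ 2), ?_, ?_⟩
    · have := Nat.sqrt_le_sqrt (le_of_lt hnN)
      simp only [Finset.mem_product, Finset.mem_range]
      exact ⟨by omega, hns⟩
    · have := Nat.sqrt_le' n
      dsimp only
      omega
  rw [Nat.card_coe_set_eq]
  calc _ ≤ _ := ncard_le_ncard hsub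
    _ ≤ ((Finset.range (Nat.sqrt N + 1)) ×ˢ Finset.range s).card := by
      rw [ncard_coe_finset]; exact Finset.card_image_le
    _ = _ := by rw [Finset.card_product, Finset.card_range, Finset.card_range]

lemma hasDensity_sub_sqrt_sq_lt_sqrt_sqrt :
    HasDensity {n | n - Nat.sqrt n ^ 2 < Nat.sqrt (Nat.sqrt n)} 0 := by
  set E : Set ℕ := {n | n - Nat.sqrt n ^ 2 < Nat.sqrt (Nat.sqrt n)}
  have h_sqrt_sqrt := tendsto_nat_sqrt_atTop.comp tendsto_nat_sqrt_atTop
  refine squeeze_zero' (g := fun N : ℕ => 2 / (Nat.sqrt (Nat.sqrt N) : ℝ))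
    (Eventually.of_forall fun _ => by positivity) ?_
    ((tendsto_const_div_atTop_nhds_zero_nat 2).comp h_sqrt_sqrt)
  filter_upwards [eventually_ge_atTop 1] with N hN
  set a := Nat.sqrt N
  set s := Nat.sqrt a
  have ha : 1 ≤ a := Nat.sqrt_pos.2 hN
  have hs : 1 ≤ s := Nat.sqrt_pos.2 ha
  have hs_sq : s ^ 2 ≤ a := Nat.sqrt_le' a
  have ha_sq : a ^ 2 ≤ N := Nat.sqrt_le' N
  have hcard : Nat.card ↥(E ∩ Iio N) ≤ (a + 1) * s :=
    calc _ ≤ Nat.card ↥({n | n - Nat.sqrt n ^ 2 < s} ∩ Iio N) := by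
          refine Nat.card_mono (toFinite _) fun n ⟨hn, hnN⟩ => ⟨?_, hnN⟩
          exact lt_of_lt_of_le hn (Nat.sqrt_le_sqrt (Nat.sqrt_le_sqrt (le_of_lt hnN)))
      _ ≤ (a + 1) * s := card_sub_sqrt_sq_lt_le s N
  have hcard_mul : Nat.card ↥(E ∩ Iio N) * s ≤ 2 * N := by
    calc _ ≤ (a + 1) * s * s := Nat.mul_le_mul_right s hcard
      _ ≤ 2 * a * a := by nlinarith
      _ ≤ 2 * N := by nlinarith
  rw [div_le_div_iff₀ (by positivity) (by positivity)]
  exact_mod_cast hcard_mul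

lemma mem_sub_sqrt_sq_add_one (A : ℕ → Set ℕ)
    (hA : ∀ i, 1 ≤ i →
      A i = {n | 1 ≤ n ∧ ∃ k, 1 ≤ k ∧ n = k ^ 2 + (i - 1)} \ ⋃ j ∈ Finset.Ico 1 i, A j)
    {n : ℕ} (hn : 1 ≤ n) : n ∈ A (n - Nat.sqrt n ^ 2 + 1) := by
  have hlow := Nat.sqrt_le' n
  have hhigh := Nat.lt_succ_sqrt' n
  rw [hA _ (by omega)]
  refine ⟨⟨hn, Nat.sqrt n, Nat.sqrt_pos.2 hn, by omega⟩, ?_⟩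
  simp only [mem_iUnion, Finset.mem_Ico, not_exists]
  intro j hj hnj
  rw [hA j hj.1] at hnj
  obtain ⟨⟨-, k, -, rfl⟩, -⟩ := hnj
  -- `j - 1 < n - ⌊√n⌋²` forces `⌊√n⌋ < k`, so `n = k² + (j - 1) ≥ (⌊√n⌋ + 1)²`.
  have hk : Nat.sqrt (k ^ 2 + (j - 1)) < k := by
    by_contra! hk
    have := Nat.pow_le_pow_left hk 2
    omega
  have := Nat.pow_le_pow_left hk 2
  omega

/-- Example: with `A i = {n : n = k² + (i-1) for some k} \ (A 1 ∪ ⋯ ∪ A (i-1))`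
and `q n = i` for `n ∈ A i`, the sequence `(q n)` has the `d`-splitting property
but not the splitting property. -/
theorem dSplitting_not_splitting_example (A : ℕ → Set ℕ)
    (hA : ∀ i, 1 ≤ i →
      A i = {n | 1 ≤ n ∧ ∃ k, 1 ≤ k ∧ n = k ^ 2 + (i - 1)} \ ⋃ j ∈ Finset.Ico 1 i, A j)
    (q : ℕ → ℕ) (hq : ∀ i, 1 ≤ i → ∀ n ∈ A i, q n = i) :
    HasDSplitting q ∧ ¬ HasSplitting q := by
  have hq_eq : ∀ n, 1 ≤ n → q n = n - Nat.sqrt n ^ 2 + 1 := fun n hn =>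
    hq _ (by omega) n (mem_sub_sqrt_sq_add_one A hA hn)
  constructor
  · refine hasDSplitting_of_tendsto_inf_compl hasDensity_sub_sqrt_sq_lt_sqrt_sqrt ?_
    refine tendsto_atTop_mono' _ ?_
      ((tendsto_nat_sqrt_atTop.comp tendsto_nat_sqrt_atTop).mono_left inf_le_left)
    rw [EventuallyLE, eventually_inf_principal]
    filter_upwards [eventually_ge_atTop 1] with n hn hnE
    simp only [mem_compl_iff, mem_ofPred_eq, not_lt] at hnE
    rw [Function.comp_apply, hq_eq n hn]
    omega
  · refine not_hasSplitting_of_frequently_eq fun M => ⟨M + 1, M.lt_succ_self, ?_⟩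
    refine ((frequently_sub_sqrt_sq_eq M).and_eventually (eventually_ge_atTop 1)).mono ?_
    rintro n ⟨hn, hn_pos⟩
    rw [hq_eq n hn_pos, hn]
end

section
/- Let (q_n) be a sequence of natural numbers and for each i let A_i = {n : q_n = i}. Then (q_n) has the splitting property if and only if there does not exist an infinite increasing sequence of indices (n_k) such that A_{n_k} is infinite for all k. -/
open Filter Topology Set

/-! Up to moving a finite piece to the other side, a splitting is a set `B` on which `q` is
bounded, with `q → ∞` along `Bᶜ`. Since `q → ∞` along a set exactly when every fibre of `q` meets
it in a finite set, such a `B` exists iff the values with infinite fibre are bounded, i.e. form a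
finite set, i.e. admit no strictly increasing enumeration. -/

section FiniteFibres

variable {α : Type*}

theorem tendsto_cofinite_inf_principal_atTop_iff {q : α → ℕ} {I : Set α} :
    Tendsto q (cofinite ⊓ 𝓟 I) atTop ↔ ∀ i, (I ∩ q ⁻¹' {i}).Finite := by
  have hbelow : ∀ b, {n | ¬(n ∈ I → b ≤ q n)} = I ∩ q ⁻¹' Iio b := fun b => by
    ext n; simp [not_le]
  simp only [tendsto_atTop, eventually_inf_principal, eventually_cofinite, hbelow]
  refine ⟨fun h i => (h (i + 1)).subset ?_, fun h b => ?_⟩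
  · exact inter_subset_inter_right I (preimage_mono fun _ hx => Nat.lt_succ_of_le (le_of_eq hx))
  · rw [← biUnion_preimage_singleton, inter_iUnion₂]
    exact (finite_Iio b).biUnion fun i _ => h i

theorem exists_bddAbove_tendsto_compl_iff_finite (q : α → ℕ) :
    (∃ B : Set α, BddAbove (q '' B) ∧ Tendsto q (cofinite ⊓ 𝓟 Bᶜ) atTop) ↔
      {i | (q ⁻¹' {i}).Infinite}.Finite := by
  simp only [tendsto_cofinite_inf_principal_atTop_iff]
  constructor
  · rintro ⟨B, ⟨M, hM⟩, hfin⟩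
    refine (finite_Iic M).subset fun i hi => mem_Iic.2 (not_lt.1 fun hMi => ?_)
    have hfibre : q ⁻¹' {i} ⊆ Bᶜ := fun n (hn : q n = i) hnB =>
      hMi.not_ge (hn ▸ hM (mem_image_of_mem q hnB))
    exact hi (inter_eq_right.2 hfibre ▸ hfin i)
  · intro hS
    obtain ⟨M, hM⟩ := hS.bddAbove
    refine ⟨q ⁻¹' Iic M, ⟨M, image_preimage_subset q _⟩, fun i => ?_⟩
    by_cases hi : i ≤ M
    · refine finite_empty.subset ?_
      rintro n ⟨hnM, rfl : q n = i⟩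
      exact hnM hi
    · exact (not_infinite.1 fun h => hi (hM h)).subset inter_subset_right

end FiniteFibres

theorem hasSplitting_iff_exists_bddAbove_tendsto_compl (q : ℕ → ℕ) :
    HasSplitting q ↔ ∃ B : Set ℕ, BddAbove (q '' B) ∧ Tendsto q (cofinite ⊓ 𝓟 Bᶜ) atTop := by
  constructor
  · rintro ⟨B, I, hunion, hdisj, hB, hI, hbdd, htends⟩
    have hcompl : Bᶜ = I := IsCompl.compl_eq ⟨hdisj, codisjoint_iff.2 hunion⟩
    refine ⟨B, ?_, hcompl ▸ ?_⟩
    · rcases hB with rfl | hB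
      · simp
      · obtain ⟨M, hM⟩ := hbdd hB
        exact ⟨M, forall_mem_image.2 hM⟩
    · rcases hI with rfl | hI
      · simp
      · rw [Nat.cofinite_eq_atTop]
        exact htends hI
  · rintro ⟨B, hbdd, htends⟩
    by_cases hB : B.Finite
    · refine ⟨∅, univ, by simp, by simp, Or.inl rfl, Or.inr infinite_univ, by simp, fun _ => ?_⟩
      rw [hB.cofinite_inf_principal_compl] at htends
      simpa [Nat.cofinite_eq_atTop] using htends
    by_cases hBc : Bᶜ.Finite
    · refine ⟨univ, ∅, by simp, by simp, Or.inr infinite_univ, Or.inl rfl, fun _ => ?_, by simp⟩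
      have hcover : q '' univ ⊆ q '' B ∪ q '' Bᶜ := by rw [← image_union, union_compl_self]
      simpa [bddAbove_def] using (hbdd.union (hBc.image q).bddAbove).mono hcover
    · exact ⟨B, Bᶜ, union_compl_self B, disjoint_compl_right, Or.inr hB, Or.inr hBc,
        fun _ => by simpa [bddAbove_def] using hbdd,
        fun _ => by rwa [Nat.cofinite_eq_atTop] at htends⟩

theorem finite_iff_not_exists_strictMono_mem {s : Set ℕ} :
    s.Finite ↔ ¬∃ f : ℕ → ℕ, StrictMono f ∧ ∀ k, f k ∈ s := by
  constructor
  · rintro hs ⟨f, hf, hfs⟩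
    exact infinite_range_of_injective hf.injective (hs.subset (range_subset_iff.2 hfs))
  · intro h
    by_contra hs
    exact h ⟨Nat.nth (· ∈ s), Nat.nth_strictMono hs, Nat.nth_mem_of_infinite hs⟩

/-- `(q n)` has the splitting property iff there is no infinite increasing
sequence of indices `(n_k)` with `{n : q n = n_k}` infinite for all `k`. -/
theorem hasSplitting_iff_no_infinite_fibers (q : ℕ → ℕ) :
    HasSplitting q ↔
      ¬ ∃ f : ℕ → ℕ, StrictMono f ∧ ∀ k, {n | q n = f k}.Infinite := by
  rw [hasSplitting_iff_exists_bddAbove_tendsto_compl, exists_bddAbove_tendsto_compl_iff_finite,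
    finite_iff_not_exists_strictMono_mem]
  rfl
end
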